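/- In B_4, if β', β'', β''' are strongly quasipositive braids (possibly trivial), then the braid σ_{1,3}^{−1} σ_{2,4} β' σ_{1,2} β'' σ_{3,4} β''' is quasipositive, and the braid σ_{1,3}^{−1} σ_{2,4} β' σ_{1,4} β'' σ_{3,4} β''' is quasipositive. -/

import Mathlib

/-- Relations for the braid group `Bₙ`: the generator `k : Fin (n-1)` represents `σ_{k+1}`,
and we impose `σ_i σ_j = σ_j σ_i` for `|i - j| > 1` and `σ_i σ_{i+1} σ_i = σ_{i+1} σ_i σ_{i+1}`. -/
def braidRels (n : ℕ) : Set (FreeGroup (Fin (n - 1))) :=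
  {r | ∃ i j : Fin (n - 1), (i : ℕ) + 1 < (j : ℕ) ∧
      r = FreeGroup.of i * FreeGroup.of j * (FreeGroup.of i)⁻¹ * (FreeGroup.of j)⁻¹} ∪
  {r | ∃ i j : Fin (n - 1), (j : ℕ) = (i : ℕ) + 1 ∧
      r = FreeGroup.of i * FreeGroup.of j * FreeGroup.of i *
          (FreeGroup.of j * FreeGroup.of i * FreeGroup.of j)⁻¹}

/-- The braid group on `n` strands, presented with generators `σ_1, …, σ_{n-1}`. -/
abbrev BraidGroup (n : ℕ) : Type := PresentedGroup (braidRels n)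

/-- The standard generator `σ_i` of `Bₙ`, for `1 ≤ i ≤ n - 1` (junk value `1` otherwise). -/
def sigma (n i : ℕ) : BraidGroup n :=
  if h : 1 ≤ i ∧ i ≤ n - 1 then PresentedGroup.of ⟨i - 1, by omega⟩ else 1

/-- The word `σ_{j-1} σ_{j-2} ⋯ σ_{i+1}`. -/
def bandConj (n i j : ℕ) : BraidGroup n :=
  ((List.range (j - 1 - i)).map fun t => sigma n (j - 1 - t)).prod

/-- The band generator `σ_{i,j} = (σ_{j-1} σ_{j-2} ⋯ σ_{i+1}) σ_i (σ_{j-1} σ_{j-2} ⋯ σ_{i+1})⁻¹`.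
In particular `σ_{i,i+1} = σ_i`. -/
def band (n i j : ℕ) : BraidGroup n :=
  bandConj n i j * sigma n i * (bandConj n i j)⁻¹

/-- The set of band generators `σ_{i,j}`, `1 ≤ i < j ≤ n`, of `Bₙ`. -/
def bandGens (n : ℕ) : Set (BraidGroup n) :=
  {x | ∃ i j : ℕ, 1 ≤ i ∧ i < j ∧ j ≤ n ∧ x = band n i j}

/-- A braid is strongly quasipositive if it is a product of band generators, i.e. lies in the
submonoid generated by the `σ_{i,j}`, `1 ≤ i < j ≤ n`. -/
def StronglyQuasipositive (n : ℕ) (x : BraidGroup n) : Prop :=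
  x ∈ Submonoid.closure (bandGens n)

/-- A braid is quasipositive if it lies in the submonoid generated by all conjugates
`α σ_k α⁻¹` of the standard generators. -/
def Quasipositive (n : ℕ) (x : BraidGroup n) : Prop :=
  x ∈ Submonoid.closure
    {x : BraidGroup n | ∃ (α : BraidGroup n) (k : ℕ), 1 ≤ k ∧ k ≤ n - 1 ∧ x = α * sigma n k * α⁻¹}

/-! Quasipositive braids form a conjugation-invariant submonoid containing the strongly
quasipositive ones. Writing `a = σ_{1,3}⁻¹ σ_{2,4}`, the braid `a β' b β'' σ_{3,4} β'''` equals
`(a β' a⁻¹) (a b σ_{3,4}) (σ_{3,4}⁻¹ β'' σ_{3,4}) β'''`, so it suffices that `a b σ_{3,4}` is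
quasipositive for `b = σ_{1,2}` and `b = σ_{1,4}`. Both are checked by an explicit computation
exhibiting them as products of two conjugates of standard generators. -/

section

variable {n : ℕ}

theorem sigma_mul_sigma_comm {i j : ℕ} (hij : i + 1 < j) :
    sigma n i * sigma n j = sigma n j * sigma n i := by
  unfold sigma
  split_ifs with hi hj
  · let a : Fin (n - 1) := ⟨i - 1, by omega⟩
    let b : Fin (n - 1) := ⟨j - 1, by omega⟩
    have hrel : (PresentedGroup.of a * PresentedGroup.of b * (PresentedGroup.of a)⁻¹ *
        (PresentedGroup.of b)⁻¹ : BraidGroup n) = 1 :=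
      PresentedGroup.one_of_mem (Or.inl ⟨a, b, by simp only [a, b]; omega, rfl⟩)
    exact commutatorElement_eq_one_iff_mul_comm.mp hrel
  all_goals simp

theorem band_succ (i : ℕ) : band n i (i + 1) = sigma n i := by
  simp [band, bandConj]

theorem band_add_two (i : ℕ) :
    band n i (i + 2) = sigma n (i + 1) * sigma n i * (sigma n (i + 1))⁻¹ := by
  simp [band, bandConj, List.range_succ]

theorem band_add_three (i : ℕ) :
    band n i (i + 3) = (sigma n (i + 2) * sigma n (i + 1)) * sigma n i *
      (sigma n (i + 2) * sigma n (i + 1))⁻¹ := by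
  simp [band, bandConj, List.range_succ]

theorem quasipositive_conj_sigma (α : BraidGroup n) (k : ℕ) (hk : 1 ≤ k) (hkn : k ≤ n - 1) :
    Quasipositive n (α * sigma n k * α⁻¹) :=
  Submonoid.subset_closure ⟨α, k, hk, hkn, rfl⟩

theorem Quasipositive.mul {x y : BraidGroup n} (hx : Quasipositive n x)
    (hy : Quasipositive n y) : Quasipositive n (x * y) :=
  Submonoid.mul_mem _ hx hy

theorem Quasipositive.conj (g : BraidGroup n) {x : BraidGroup n} (hx : Quasipositive n x) :
    Quasipositive n (g * x * g⁻¹) := by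
  induction hx using Submonoid.closure_induction with
  | mem y hy =>
    obtain ⟨α, k, hk, hkn, rfl⟩ := hy
    simpa only [mul_assoc, mul_inv_rev] using quasipositive_conj_sigma (g * α) k hk hkn
  | one =>
    rw [mul_one, mul_inv_cancel]
    exact Submonoid.one_mem _
  | mul y z _ _ hy hz => simpa only [mul_assoc, inv_mul_cancel_left] using hy.mul hz

theorem StronglyQuasipositive.quasipositive {x : BraidGroup n}
    (hx : StronglyQuasipositive n x) : Quasipositive n x := by
  refine Submonoid.closure_mono ?_ hx
  rintro _ ⟨i, j, hi, hij, hjn, rfl⟩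
  exact ⟨bandConj n i j, i, hi, by omega, rfl⟩

theorem Quasipositive.interleave {a b c x y z : BraidGroup n} (habc : Quasipositive n (a * b * c))
    (hx : Quasipositive n x) (hy : Quasipositive n y) (hz : Quasipositive n z) :
    Quasipositive n (a * x * b * y * c * z) := by
  have h : a * x * b * y * c * z = (a * x * a⁻¹) * (a * b * c) * (c⁻¹ * y * c⁻¹⁻¹) * z := by
    group
  rw [h]
  exact (((hx.conj a).mul habc).mul (hy.conj c⁻¹)).mul hz

end

section

local notation "σ" => sigma 4

theorem band₁₃_eq : band 4 1 3 = σ 2 * σ 1 * (σ 2)⁻¹ := band_add_two 1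

theorem band₂₄_eq : band 4 2 4 = σ 3 * σ 2 * (σ 3)⁻¹ := band_add_two 2

theorem band₁₄_eq : band 4 1 4 = (σ 3 * σ 2) * σ 1 * (σ 3 * σ 2)⁻¹ := band_add_three 1

theorem quasipositive_band₁₃_inv_band₂₄_band₁₂_band₃₄ :
    Quasipositive 4 ((band 4 1 3)⁻¹ * band 4 2 4 * band 4 1 2 * band 4 3 4) := by
  have h : (band 4 1 3)⁻¹ * band 4 2 4 * band 4 1 2 * band 4 3 4 =
      (σ 2 * (σ 1)⁻¹ * (σ 2)⁻¹) * σ 3 * (σ 2 * (σ 1)⁻¹ * (σ 2)⁻¹)⁻¹ *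
        (1 * σ 2 * 1⁻¹) := by
    rw [band₁₃_eq, band₂₄_eq, band_succ, band_succ, mul_assoc _ (σ 1) (σ 3),
      sigma_mul_sigma_comm (i := 1) (j := 3) (by norm_num)]
    group
  rw [h]
  exact (quasipositive_conj_sigma _ 3 (by norm_num) (by norm_num)).mul
    (quasipositive_conj_sigma 1 2 (by norm_num) (by norm_num))

theorem quasipositive_band₁₃_inv_band₂₄_band₁₄_band₃₄ :
    Quasipositive 4 ((band 4 1 3)⁻¹ * band 4 2 4 * band 4 1 4 * band 4 3 4) := by
  have h : (band 4 1 3)⁻¹ * band 4 2 4 * band 4 1 4 * band 4 3 4 =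
      (σ 2 * (σ 1)⁻¹ * (σ 2)⁻¹) * σ 3 * (σ 2 * (σ 1)⁻¹ * (σ 2)⁻¹)⁻¹ *
        ((σ 2 * (σ 1)⁻¹) * σ 2 * (σ 2 * (σ 1)⁻¹)⁻¹) := by
    rw [band₁₃_eq, band₂₄_eq, band₁₄_eq, band_succ]
    group
  rw [h]
  exact (quasipositive_conj_sigma _ 3 (by norm_num) (by norm_num)).mul
    (quasipositive_conj_sigma _ 2 (by norm_num) (by norm_num))

end

/-- In `B₄`, for strongly quasipositive `β', β'', β'''`, the braids
`σ_{1,3}⁻¹ σ_{2,4} β' σ_{1,2} β'' σ_{3,4} β'''` and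
`σ_{1,3}⁻¹ σ_{2,4} β' σ_{1,4} β'' σ_{3,4} β'''` are quasipositive. -/
theorem claim_obscase2 (β' β'' β''' : BraidGroup 4)
    (hβ' : StronglyQuasipositive 4 β') (hβ'' : StronglyQuasipositive 4 β'')
    (hβ''' : StronglyQuasipositive 4 β''') :
    Quasipositive 4
      ((band 4 1 3)⁻¹ * band 4 2 4 * β' * band 4 1 2 * β'' * band 4 3 4 * β''') ∧
    Quasipositive 4
      ((band 4 1 3)⁻¹ * band 4 2 4 * β' * band 4 1 4 * β'' * band 4 3 4 * β''') :=
  ⟨quasipositive_band₁₃_inv_band₂₄_band₁₂_band₃₄.interleave hβ'.quasipositive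
      hβ''.quasipositive hβ'''.quasipositive,
    quasipositive_band₁₃_inv_band₂₄_band₁₄_band₃₄.interleave hβ'.quasipositive
      hβ''.quasipositive hβ'''.quasipositive⟩
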